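/- For every integer n > 0, the sum over all weakly decreasing tuples (λ₁, λ₂, ..., λₙ) of nonnegative integers with λ₁ + λ₂ + ... + λₙ = n of the product C(λ₁,λ₂)·C(λ₂,λ₃)···C(λₙ,0) multiplied by λ₁ equals (n+1)·2^(n-2) as rational numbers; equivalently, 4 times this sum equals (n+1)·2^n. -/

import Mathlib

/-!
Since `C(a, b) = 0` for `a < b`, the binomial product vanishes on tuples that are not weakly
decreasing, so the sum may run over all compositions of `n` into `n` parts. Splitting off the
first part `j` leaves the sum `S(l, s, j)` of `binomProd(t) · C(j, t₁)` over compositions `t` of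
`s = n - j` into `l = n - 1` parts. Peeling off first parts again and applying Vandermonde's
identity shows that `S(l, s, m)` is the multiset coefficient `C(m + s - 1, s)` whenever `s ≤ l`.
Hence the tuples with first part `j` contribute `C(n - 1, j - 1)`, and
`∑ j C(n - 1, j - 1) = (n + 1) 2^(n - 2)`.
-/

open Finset

/-- Weakly decreasing tuples `(λ₁,…,λₙ)` of nonnegative integers with `λ₁+⋯+λₙ = n`. -/
def partitionTuples (n : ℕ) : Finset (Fin n → ℕ) :=
  (Finset.Nat.antidiagonalTuple n n).filter fun t => ∀ i j : Fin n, i ≤ j → t j ≤ t i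

/-- The product `C(λ₁,λ₂)·C(λ₂,λ₃)⋯C(λₙ,0)` with the convention `λ_{n+1} = 0`. -/
def binomProd (n : ℕ) (t : Fin n → ℕ) : ℕ :=
  ∏ i : Fin n, Nat.choose (t i) (if h : (i : ℕ) + 1 < n then t ⟨(i : ℕ) + 1, h⟩ else 0)

theorem sum_antidiagonalTuple_succ {M : Type*} [AddCommMonoid M] (l s : ℕ)
    (f : (Fin (l + 1) → ℕ) → M) :
    ∑ t ∈ Nat.antidiagonalTuple (l + 1) s, f t =
      ∑ p ∈ antidiagonal s, ∑ t ∈ Nat.antidiagonalTuple l p.2, f (Fin.cons p.1 t) := by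
  rw [sum_sigma']
  refine sum_bij' (fun t _ => ⟨(t 0, s - t 0), Fin.tail t⟩) (fun x _ => Fin.cons x.1.1 x.2)
    ?_ ?_ ?_ ?_ ?_
  · intro t ht
    rw [Nat.mem_antidiagonalTuple, Fin.sum_univ_succ] at ht
    simp only [mem_sigma, HasAntidiagonal.mem_antidiagonal, Nat.mem_antidiagonalTuple, Fin.tail]
    omega
  · rintro ⟨⟨a, b⟩, t⟩ ht
    simp only [mem_sigma, HasAntidiagonal.mem_antidiagonal, Nat.mem_antidiagonalTuple] at ht
    rw [Nat.mem_antidiagonalTuple, Fin.sum_univ_succ]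
    simp only [Fin.cons_zero, Fin.cons_succ]
    omega
  · intro t _
    exact Fin.cons_self_tail t
  · rintro ⟨⟨a, b⟩, t⟩ ht
    simp only [mem_sigma, HasAntidiagonal.mem_antidiagonal, Nat.mem_antidiagonalTuple] at ht
    obtain ⟨rfl, -⟩ := ht
    simp only [Fin.cons_zero, Fin.tail_cons, Nat.add_sub_cancel_left]
  · intro t _
    simp only [Fin.cons_self_tail]

def tupleHead : (n : ℕ) → (Fin n → ℕ) → ℕ
  | 0, _ => 0
  | _ + 1, t => t 0

theorem binomProd_cons (l a : ℕ) (t : Fin l → ℕ) :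
    binomProd (l + 1) (Fin.cons a t) = a.choose (tupleHead l t) * binomProd l t := by
  rw [binomProd, Fin.prod_univ_succ]
  congr 1
  · cases l <;> rfl
  · refine prod_congr rfl fun i _ => ?_
    simp only [Fin.cons_succ, Fin.val_succ, Nat.add_lt_add_iff_right]
    split_ifs <;> rfl

theorem antitone_of_binomProd_ne_zero {n : ℕ} {t : Fin n → ℕ} (h : binomProd n t ≠ 0) :
    Antitone t := by
  cases n with
  | zero => exact Subsingleton.antitone t
  | succ l =>
    refine Fin.antitone_iff_succ_le.mpr fun i => ?_
    have hi := prod_ne_zero_iff.mp h i.castSucc (mem_univ _)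
    rw [dif_pos (by simp), Ne, Nat.choose_eq_zero_iff, not_lt] at hi
    exact hi

theorem sum_partitionTuples_binomProd_mul (n : ℕ) (f : (Fin n → ℕ) → ℕ) :
    ∑ t ∈ partitionTuples n, binomProd n t * f t =
      ∑ t ∈ Nat.antidiagonalTuple n n, binomProd n t * f t :=
  sum_filter_of_ne fun _ _ h => antitone_of_binomProd_ne_zero (left_ne_zero_of_mul h)

def headChooseSum (l s m : ℕ) : ℕ :=
  ∑ t ∈ Nat.antidiagonalTuple l s, binomProd l t * m.choose (tupleHead l t)

theorem sum_binomProd_mul_tupleHead_succ (l s : ℕ) (w : ℕ → ℕ) :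
    ∑ t ∈ Nat.antidiagonalTuple (l + 1) s, binomProd (l + 1) t * w (tupleHead (l + 1) t) =
      ∑ p ∈ antidiagonal s, w p.1 * headChooseSum l p.2 p.1 := by
  rw [sum_antidiagonalTuple_succ]
  refine sum_congr rfl fun p _ => ?_
  rw [headChooseSum, mul_sum]
  refine sum_congr rfl fun t _ => ?_
  rw [binomProd_cons]
  simp only [tupleHead, Fin.cons_zero]
  ring

theorem sum_choose_mul_multichoose (m s : ℕ) :
    ∑ p ∈ antidiagonal s, m.choose p.1 * p.1.multichoose p.2 = m.multichoose s := by
  cases s with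
  | zero => simp
  | succ s =>
    rw [Nat.multichoose_eq, Nat.add_sub_assoc (by omega), Nat.add_sub_cancel, Nat.add_choose_eq]
    refine sum_congr rfl fun p hp => ?_
    rw [HasAntidiagonal.mem_antidiagonal] at hp
    rw [Nat.multichoose_eq, hp, Nat.add_sub_cancel]

/-- The case `m = 0` is carried along because the term with first part `0` in the recursion has
tail sum `s`, which may exceed `l`. -/
theorem headChooseSum_eq_multichoose {l s m : ℕ} (h : s ≤ l ∨ m = 0) :
    headChooseSum l s m = m.multichoose s := by
  induction l generalizing s m with
  | zero =>
    cases s with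
    | zero => simp [headChooseSum, tupleHead, binomProd]
    | succ s =>
      obtain rfl : m = 0 := h.resolve_left (by omega)
      simp [headChooseSum]
  | succ l ih =>
    rw [← sum_choose_mul_multichoose, headChooseSum, sum_binomProd_mul_tupleHead_succ]
    refine sum_congr rfl fun p hp => ?_
    rw [HasAntidiagonal.mem_antidiagonal] at hp
    rcases Nat.eq_zero_or_pos p.1 with h1 | h1
    · rw [ih (Or.inr h1)]
    · rcases h with h | rfl
      · rw [ih (Or.inl (by omega))]
      · rw [Nat.choose_eq_zero_of_lt h1, zero_mul, zero_mul]

theorem two_mul_sum_antidiagonal_succ_mul_choose (l : ℕ) :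
    2 * ∑ p ∈ antidiagonal l, (p.1 + 1) * l.choose p.2 = (l + 2) * 2 ^ l := by
  have hsplit : ∑ p ∈ antidiagonal l, (p.1 + 1) * l.choose p.2 =
      ∑ k ∈ range (l + 1), k * l.choose k + ∑ k ∈ range (l + 1), l.choose k := by
    rw [Nat.sum_antidiagonal_eq_sum_range_succ (fun i j => (i + 1) * l.choose j),
      ← sum_add_distrib]
    refine sum_congr rfl fun k hk => ?_
    rw [Nat.choose_symm (Nat.lt_succ_iff.mp (mem_range.mp hk))]
    ring
  rw [hsplit, Nat.sum_range_mul_choose, Nat.sum_range_choose]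
  cases l with
  | zero => rfl
  | succ l =>
    rw [Nat.add_sub_cancel, pow_succ]
    ring

theorem stmt2 (n : ℕ) (hn : 0 < n) :
    4 * ∑ t ∈ partitionTuples n, binomProd n t * t ⟨0, hn⟩ = (n + 1) * 2 ^ n := by
  obtain ⟨l, rfl⟩ : ∃ l, n = l + 1 := ⟨n - 1, by omega⟩
  have hsum : ∑ t ∈ partitionTuples (l + 1), binomProd (l + 1) t * t ⟨0, hn⟩ =
      ∑ p ∈ antidiagonal l, (p.1 + 1) * l.choose p.2 := by
    rw [sum_partitionTuples_binomProd_mul]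
    refine (sum_binomProd_mul_tupleHead_succ l (l + 1) id).trans ?_
    rw [Nat.sum_antidiagonal_succ, id, zero_mul, zero_add]
    refine sum_congr rfl fun p hp => ?_
    rw [HasAntidiagonal.mem_antidiagonal] at hp
    dsimp only
    rw [headChooseSum_eq_multichoose (Or.inl (by omega)), Nat.multichoose_eq]
    congr 2
    omega
  calc _ = 2 * (2 * ∑ p ∈ antidiagonal l, (p.1 + 1) * l.choose p.2) := by rw [hsum]; ring
    _ = _ := by rw [two_mul_sum_antidiagonal_succ_mul_choose]; ring
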